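/- arXiv:2004.12790 — 5 statements merged into one kernel-verified Lean document; each statement's English description precedes it below -/
import Mathlib

section
/- Let A be a closed, densely defined linear operator on a complex Hilbert space H with 0 ∈ ρ(A). Let U_n ⊂ H be finite-dimensional subspaces, P_n ∈ L(H) projections onto U_n with P_n x → x for every x ∈ H, and let A_n ∈ L(U_n) be invertible. Then the following are equivalent: (a) A_n⁻¹ P_n x → A⁻¹ x for all x ∈ H; (b) sup_{n} ‖A_n⁻¹‖_{L(U_n)} < ∞ and for all x ∈ D(A) there exist x_n ∈ U_n such that x_n → x and A_n x_n → A x. -/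
open Filter Topology Metric

noncomputable section

variable {H : Type*} [NormedAddCommGroup H] [InnerProductSpace ℂ H] [CompleteSpace H]

/-- `R : H →L[ℂ] H` is a (two-sided, everywhere defined) bounded inverse of `A - lam`,
i.e. `lam` belongs to the resolvent set of `A` with resolvent `R`. -/
def IsResolventAt (A : H →ₗ.[ℂ] H) (lam : ℂ) (R : H →L[ℂ] H) : Prop :=
  (∀ x : A.domain, R (A x - lam • (x : H)) = (x : H)) ∧
  ∀ y : H, ∃ hy : R y ∈ A.domain, A ⟨R y, hy⟩ - lam • R y = y

/-- The resolvent set `ρ(A)` of a (possibly unbounded) operator `A`. -/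
def presolventSet (A : H →ₗ.[ℂ] H) : Set ℂ :=
  {lam | ∃ R, IsResolventAt A lam R}

-- The resolvent operator `(A - lam)⁻¹` (with junk value `0` off the resolvent set).
open scoped Classical in
def resolventOf (A : H →ₗ.[ℂ] H) (lam : ℂ) : H →L[ℂ] H :=
  if h : ∃ R, IsResolventAt A lam R then h.choose else 0

/-- The `ε`-pseudospectrum `σ_ε(A) = {λ : ‖(A-λ)⁻¹‖ > 1/ε}`, where `‖(A-λ)⁻¹‖` is
understood as `∞` for `λ` in the spectrum. -/
def pseudoSpectrum (ε : ℝ) (A : H →ₗ.[ℂ] H) : Set ℂ :=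
  {lam | lam ∉ presolventSet A ∨ 1 / ε < ‖resolventOf A lam‖}

/-- The numerical range `W(T) = {⟨T x, x⟩ : ‖x‖ = 1}` of a bounded operator `T`;
`⟨T x, x⟩` (inner product linear in the first argument) is written as
`inner x (T x)` in the mathlib convention. -/
def numRange (T : H →L[ℂ] H) : Set ℂ :=
  {z | ∃ x : H, ‖x‖ = 1 ∧ z = (inner ℂ x (T x) : ℂ)}

/-- The numerical range of a (possibly unbounded) operator. -/
def pnumRange (A : H →ₗ.[ℂ] H) : Set ℂ :=
  {z | ∃ x : A.domain, ‖(x : H)‖ = 1 ∧ z = (inner ℂ (x : H) (A x) : ℂ)}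

/-- The numerical radius of a bounded operator. -/
def nradius (T : H →L[ℂ] H) : ℝ :=
  sSup ((fun z => ‖z‖) '' numRange T)

/-- The numerical range of a bounded operator on a subspace `U` of `H`. -/
def numRangeSub {U : Submodule ℂ H} (T : U →L[ℂ] U) : Set ℂ :=
  {z | ∃ x : U, ‖(x : H)‖ = 1 ∧ z = (inner ℂ (x : H) ((T x : U) : H) : ℂ)}

/-- `B_δ(U) = {z : dist (z, U) < δ}`, the `δ`-neighborhood of a set `U ⊆ ℂ`. -/
def nbhdSet (δ : ℝ) (U : Set ℂ) : Set ℂ :=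
  {z | ∃ u ∈ U, dist z u < δ}

/-- `U⁻¹ = {z⁻¹ : z ∈ U \ {0}}`. -/
def invSet (U : Set ℂ) : Set ℂ :=
  {z | ∃ u ∈ U, u ≠ 0 ∧ z = u⁻¹}

/-- `U + s = {z + s : z ∈ U}`. -/
def shiftSet (U : Set ℂ) (s : ℂ) : Set ℂ :=
  {z | ∃ u ∈ U, z = u + s}

/-! Necessity: strong convergence of `A_n⁻¹ P_n` bounds these operators uniformly by the
uniform boundedness principle, and `x_n := A_n⁻¹ P_n A x` are consistent approximations.
Sufficiency is the "stability + consistency ⇒ convergence" argument: for `y = A x`,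
`A_n⁻¹ P_n y - x_n = A_n⁻¹ (P_n y - A_n x_n)`, whose norm is at most `C ‖P_n y - A_n x_n‖ → 0`. -/

section Approximation

variable {𝕜 E : Type*} [NontriviallyNormedField 𝕜] [NormedAddCommGroup E] [NormedSpace 𝕜 E]

theorem exists_norm_le_of_tendsto_comp_projection [CompleteSpace E] {U : ℕ → Submodule 𝕜 E}
    (Q : ∀ n, E →L[𝕜] U n) (hQ : ∀ n (u : U n), Q n u = u) (B : ∀ n, U n →L[𝕜] U n)
    (hB : ∀ x, ∃ y, Tendsto (fun n => (B n (Q n x) : E)) atTop (𝓝 y)) :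
    ∃ C, ∀ n, ‖B n‖ ≤ C := by
  obtain ⟨C, hC⟩ : ∃ C, ∀ n, ‖(U n).subtypeL.comp ((B n).comp (Q n))‖ ≤ C := by
    refine banach_steinhaus fun x => ?_
    obtain ⟨y, hy⟩ := hB x
    obtain ⟨C, hC⟩ := hy.norm.bddAbove_range
    exact ⟨C, fun n => hC ⟨n, rfl⟩⟩
  refine ⟨max C 0, fun n => (B n).opNorm_le_bound (le_max_right _ _) fun u => ?_⟩
  calc ‖B n u‖ = ‖(U n).subtypeL.comp ((B n).comp (Q n)) u‖ := by simp [hQ]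
    _ ≤ max C 0 * ‖u‖ :=
      ((ContinuousLinearMap.le_opNorm _ _).trans
        (mul_le_mul_of_nonneg_right ((hC n).trans (le_max_left _ _)) (norm_nonneg _)))

theorem tendsto_of_norm_le_of_consistent {ι : Type*} {l : Filter ι} {U : ι → Submodule 𝕜 E}
    {T : ∀ n, U n → U n} {B : ∀ n, U n →L[𝕜] U n} (hBT : ∀ n u, B n (T n u) = u) {C : ℝ}
    (hC : ∀ n, ‖B n‖ ≤ C) {ys xs : ∀ n, U n} {x y : E}
    (hys : Tendsto (fun n => (ys n : E)) l (𝓝 y)) (hxs : Tendsto (fun n => (xs n : E)) l (𝓝 x))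
    (hTxs : Tendsto (fun n => (T n (xs n) : E)) l (𝓝 y)) :
    Tendsto (fun n => (B n (ys n) : E)) l (𝓝 x) := by
  have hdefect : Tendsto (fun n => C * ‖(ys n : E) - T n (xs n)‖) l (𝓝 0) := by
    simpa using ((hys.sub hTxs).norm.const_mul C)
  have hclose : Tendsto (fun n => (B n (ys n) : E) - xs n) l (𝓝 0) := by
    refine squeeze_zero_norm (fun n => ?_) hdefect
    calc ‖(B n (ys n) : E) - xs n‖ = ‖B n (ys n - T n (xs n))‖ := by
          rw [map_sub, hBT, Submodule.coe_norm, Submodule.coe_sub]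
      _ ≤ ‖B n‖ * ‖ys n - T n (xs n)‖ := (B n).le_opNorm _
      _ ≤ C * ‖(ys n : E) - T n (xs n)‖ :=
        mul_le_mul_of_nonneg_right (hC n) (norm_nonneg _)
  simpa using hclose.add hxs

end Approximation

section Resolvent

variable {E : Type*} [NormedAddCommGroup E] [InnerProductSpace ℂ E] {A : E →ₗ.[ℂ] E}

theorem isResolventAt_resolventOf {lam : ℂ} (h : lam ∈ presolventSet A) :
    IsResolventAt A lam (resolventOf A lam) := by
  have h' : ∃ R, IsResolventAt A lam R := h
  rw [resolventOf, dif_pos h']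
  exact h'.choose_spec

theorem resolventOf_zero_apply_apply (h0 : (0 : ℂ) ∈ presolventSet A) (x : A.domain) :
    resolventOf A 0 (A x) = x := by
  simpa using (isResolventAt_resolventOf h0).1 x

theorem apply_resolventOf_zero (h0 : (0 : ℂ) ∈ presolventSet A) (y : E) :
    ∃ hy : resolventOf A 0 y ∈ A.domain, A ⟨resolventOf A 0 y, hy⟩ = y := by
  simpa using (isResolventAt_resolventOf h0).2 y

end Resolvent

theorem strongApprox_iff_bounded_and_consistent_general
    (A : H →ₗ.[ℂ] H)
    (h0 : (0 : ℂ) ∈ presolventSet A)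
    (U : ℕ → Submodule ℂ H)
    (P : ℕ → H →L[ℂ] H)
    (hPmem : ∀ n x, P n x ∈ U n)
    (hPproj : ∀ n, ∀ x ∈ U n, P n x = x)
    (hPconv : ∀ x : H, Tendsto (fun n => P n x) atTop (𝓝 x))
    (T : ∀ n, ↥(U n) →L[ℂ] ↥(U n)) (Tinv : ∀ n, ↥(U n) →L[ℂ] ↥(U n))
    (hTinv : ∀ n, (∀ u, Tinv n (T n u) = u) ∧ ∀ u, T n (Tinv n u) = u)
    :
    (∀ x : H,
        Tendsto (fun n => (↑(Tinv n ⟨P n x, hPmem n x⟩) : H)) atTop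
          (𝓝 (resolventOf A 0 x)))
      ↔
      ((∃ C : ℝ, ∀ n, ‖Tinv n‖ ≤ C) ∧
        ∀ x : A.domain, ∃ xs : ∀ n, ↥(U n),
          Tendsto (fun n => ((xs n : U n) : H)) atTop (𝓝 (x : H)) ∧
            Tendsto (fun n => ((T n (xs n) : U n) : H)) atTop (𝓝 (A x))) := by
  constructor
  · intro hconv
    refine ⟨exists_norm_le_of_tendsto_comp_projection
      (fun n => (P n).codRestrict (U n) (hPmem n)) (fun n u => Subtype.ext (hPproj n u u.2))
      Tinv fun x => ⟨_, hconv x⟩, fun x => ⟨fun n => Tinv n ⟨P n (A x), hPmem n (A x)⟩, ?_, ?_⟩⟩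
    · simpa [resolventOf_zero_apply_apply h0] using hconv (A x)
    · simpa [(hTinv _).2] using hPconv (A x)
  · rintro ⟨⟨C, hC⟩, hcons⟩ x
    obtain ⟨hx, hAx⟩ := apply_resolventOf_zero h0 x
    obtain ⟨xs, hxs, hTxs⟩ := hcons ⟨_, hx⟩
    exact tendsto_of_norm_le_of_consistent (fun n => (hTinv n).1) hC (hPconv x) hxs
      (hAx ▸ hTxs)

/-- Lemma 3.1. -/
theorem strongApprox_iff_bounded_and_consistent
    (A : H →ₗ.[ℂ] H)
    (hclosed : IsClosed (A.graph : Set (H × H)))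
    (hdense : Dense (A.domain : Set H))
    (h0 : (0 : ℂ) ∈ presolventSet A)
    (U : ℕ → Submodule ℂ H) (hUfin : ∀ n, FiniteDimensional ℂ (U n))
    (P : ℕ → H →L[ℂ] H)
    (hPmem : ∀ n x, P n x ∈ U n)
    (hPproj : ∀ n, ∀ x ∈ U n, P n x = x)
    (hPconv : ∀ x : H, Tendsto (fun n => P n x) atTop (𝓝 x))
    (T : ∀ n, ↥(U n) →L[ℂ] ↥(U n)) (Tinv : ∀ n, ↥(U n) →L[ℂ] ↥(U n))
    (hTinv : ∀ n, (∀ u, Tinv n (T n u) = u) ∧ ∀ u, T n (Tinv n u) = u)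
    :
    (∀ x : H,
        Tendsto (fun n => (↑(Tinv n ⟨P n x, hPmem n x⟩) : H)) atTop
          (𝓝 (resolventOf A 0 x)))
      ↔
      ((∃ C : ℝ, ∀ n, ‖Tinv n‖ ≤ C) ∧
        ∀ x : A.domain, ∃ xs : ∀ n, ↥(U n),
          Tendsto (fun n => ((xs n : U n) : H)) atTop (𝓝 (x : H)) ∧
            Tendsto (fun n => ((T n (xs n) : U n) : H)) atTop (𝓝 (A x))) :=
  strongApprox_iff_bounded_and_consistent_general A h0 U P hPmem hPproj hPconv T Tinv hTinv
end
end

section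
/- Let A be a closed, densely defined linear operator on a complex Hilbert space H with 0 ∈ ρ(A), and suppose the family (P_n, A_n)_{n∈ℕ} approximates A strongly. Then for every δ > 0 there exists n₀ ∈ ℕ such that W(A⁻¹) ⊂ B_δ(W(A_n⁻¹)) for all n ≥ n₀. -/
open Filter Topology Metric

noncomputable section

variable {H : Type*} [NormedAddCommGroup H] [InnerProductSpace ℂ H] [CompleteSpace H]

/-! `W(A⁻¹)` is bounded, hence totally bounded. Each of its points `⟪x, A⁻¹x⟫` (`‖x‖ = 1`) is the
limit of the Rayleigh quotients `⟪P_n x, A_n⁻¹ P_n x⟫ / ‖P_n x‖² ∈ W(A_n⁻¹)`, and a finite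
`δ/2`-net of `W(A⁻¹)` turns this pointwise approximation into a uniform one. -/

lemma mem_nbhdSet_of_dist_lt {U : Set ℂ} {z w : ℂ} {a b : ℝ} (hzw : dist z w < a)
    (hw : w ∈ nbhdSet b U) : z ∈ nbhdSet (a + b) U := by
  obtain ⟨u, hu, hwu⟩ := hw
  exact ⟨u, hu, (dist_triangle z w u).trans_lt (add_lt_add hzw hwu)⟩

lemma eventually_mem_nbhdSet_of_tendsto {ι : Type*} {l : Filter ι} {W : ι → Set ℂ}
    {z : ι → ℂ} {z₀ : ℂ} (hz : Tendsto z l (𝓝 z₀)) (hzW : ∀ᶠ i in l, z i ∈ W i)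
    {ε : ℝ} (hε : 0 < ε) : ∀ᶠ i in l, z₀ ∈ nbhdSet ε (W i) := by
  filter_upwards [hzW, Metric.tendsto_nhds.mp hz ε hε] with i hzi hdist
  exact ⟨z i, hzi, by rwa [dist_comm]⟩

lemma TotallyBounded.eventually_subset_nbhdSet {ι : Type*} {l : Filter ι} {K : Set ℂ}
    (hK : TotallyBounded K) {W : ι → Set ℂ}
    (hW : ∀ z ∈ K, ∀ ε > 0, ∀ᶠ i in l, z ∈ nbhdSet ε (W i)) {δ : ℝ} (hδ : 0 < δ) :
    ∀ᶠ i in l, K ⊆ nbhdSet δ (W i) := by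
  obtain ⟨F, hFK, hF, hKF⟩ := finite_approx_of_totallyBounded hK (δ / 2) (half_pos hδ)
  have hnet : ∀ᶠ i in l, ∀ w ∈ F, w ∈ nbhdSet (δ / 2) (W i) :=
    (eventually_all_finite hF).mpr fun w hw => hW w (hFK hw) (δ / 2) (half_pos hδ)
  filter_upwards [hnet] with i hi z hz
  obtain ⟨w, hwF, hzw⟩ := Set.mem_iUnion₂.mp (hKF hz)
  simpa using mem_nbhdSet_of_dist_lt hzw (hi w hwF)

section

variable {E : Type*} [NormedAddCommGroup E] [InnerProductSpace ℂ E]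

lemma numRange_subset_closedBall (T : E →L[ℂ] E) :
    numRange T ⊆ closedBall (0 : ℂ) ‖T‖ := by
  rintro z ⟨x, hx, rfl⟩
  rw [mem_closedBall, dist_zero_right]
  calc ‖(inner ℂ x (T x) : ℂ)‖ ≤ ‖x‖ * ‖T x‖ := norm_inner_le_norm _ _
    _ ≤ ‖x‖ * (‖T‖ * ‖x‖) := by gcongr; exact T.le_opNorm x
    _ = ‖T‖ := by rw [hx]; ring

lemma totallyBounded_numRange (T : E →L[ℂ] E) : TotallyBounded (numRange T) :=
  (isCompact_closedBall _ _).totallyBounded.subset (numRange_subset_closedBall T)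

lemma inner_div_norm_sq_mem_numRangeSub {U : Submodule ℂ E} (T : U →L[ℂ] U) {v : U}
    (hv : v ≠ 0) :
    (inner ℂ (v : E) (T v : E) : ℂ) / ((‖v‖ : ℂ) ^ 2) ∈ numRangeSub T := by
  have hv' : ‖v‖ ≠ 0 := norm_ne_zero_iff.mpr hv
  refine ⟨((‖v‖⁻¹ : ℝ) : ℂ) • v, ?_, ?_⟩
  · rw [Submodule.coe_smul, norm_smul, Submodule.coe_norm, Complex.norm_real, norm_inv,
      norm_norm, ← Submodule.coe_norm, inv_mul_cancel₀ hv']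
  · rw [map_smul, Submodule.coe_smul, Submodule.coe_smul, inner_smul_left, inner_smul_right,
      Complex.conj_ofReal]
    push_cast
    field_simp

lemma eventually_inner_div_norm_sq_mem_nbhdSet_numRangeSub {ι : Type*} {l : Filter ι}
    {U : ι → Submodule ℂ E} (S : ∀ i, U i →L[ℂ] U i) {v : ∀ i, U i} {x y : E}
    (hx : x ≠ 0) (hv : Tendsto (fun i => (v i : E)) l (𝓝 x))
    (hSv : Tendsto (fun i => (S i (v i) : E)) l (𝓝 y)) {ε : ℝ} (hε : 0 < ε) :
    ∀ᶠ i in l, (inner ℂ x y : ℂ) / ((‖x‖ : ℂ) ^ 2) ∈ nbhdSet ε (numRangeSub (S i)) := by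
  have hnorm : Tendsto (fun i => ((‖(v i : E)‖ : ℂ) ^ 2)) l (𝓝 ((‖x‖ : ℂ) ^ 2)) :=
    ((Complex.continuous_ofReal.tendsto _).comp hv.norm).pow 2
  have hquot := (hv.inner hSv).div hnorm (by simpa using hx)
  refine eventually_mem_nbhdSet_of_tendsto hquot ?_ hε
  filter_upwards [hv.eventually_ne hx] with i hvi
  exact inner_div_norm_sq_mem_numRangeSub (S i) fun h => hvi (by simp [h])

end

theorem numRange_inv_subset_nbhd_numRange_approx_general
    (A : H →ₗ.[ℂ] H)
    (U : ℕ → Submodule ℂ H)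
    (P : ℕ → H →L[ℂ] H)
    (hPmem : ∀ n x, P n x ∈ U n)
    (hPconv : ∀ x : H, Tendsto (fun n => P n x) atTop (𝓝 x))
    (Tinv : ∀ n, ↥(U n) →L[ℂ] ↥(U n))
    (happrox : ∀ x : H,
      Tendsto (fun n => (↑(Tinv n ⟨P n x, hPmem n x⟩) : H)) atTop
        (𝓝 (resolventOf A 0 x)))
    :
    ∀ δ > (0 : ℝ), ∃ n₀ : ℕ, ∀ n ≥ n₀,
      numRange (resolventOf A 0) ⊆ nbhdSet δ (numRangeSub (Tinv n)) := by
  intro δ hδ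
  refine eventually_atTop.mp <|
    (totallyBounded_numRange _).eventually_subset_nbhdSet ?_ hδ
  rintro _ ⟨x, hx, rfl⟩ ε hε
  have hx0 : x ≠ 0 := by rintro rfl; simp at hx
  simpa [hx] using
    eventually_inner_div_norm_sq_mem_nbhdSet_numRangeSub Tinv hx0 (hPconv x) (happrox x) hε

/-- Lemma 3.4(b). -/
theorem numRange_inv_subset_nbhd_numRange_approx
    (A : H →ₗ.[ℂ] H)
    (hclosed : IsClosed (A.graph : Set (H × H)))
    (hdense : Dense (A.domain : Set H))
    (h0 : (0 : ℂ) ∈ presolventSet A)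
    (U : ℕ → Submodule ℂ H) (hUfin : ∀ n, FiniteDimensional ℂ (U n))
    (P : ℕ → H →L[ℂ] H)
    (hPmem : ∀ n x, P n x ∈ U n)
    (hPproj : ∀ n, ∀ x ∈ U n, P n x = x)
    (hPconv : ∀ x : H, Tendsto (fun n => P n x) atTop (𝓝 x))
    (T : ∀ n, ↥(U n) →L[ℂ] ↥(U n)) (Tinv : ∀ n, ↥(U n) →L[ℂ] ↥(U n))
    (hTinv : ∀ n, (∀ u, Tinv n (T n u) = u) ∧ ∀ u, T n (Tinv n u) = u)
    (happrox : ∀ x : H,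
      Tendsto (fun n => (↑(Tinv n ⟨P n x, hPmem n x⟩) : H)) atTop
        (𝓝 (resolventOf A 0 x)))
    :
    ∀ δ > (0 : ℝ), ∃ n₀ : ℕ, ∀ n ≥ n₀,
      numRange (resolventOf A 0) ⊆ nbhdSet δ (numRangeSub (Tinv n)) :=
  numRange_inv_subset_nbhd_numRange_approx_general A U P hPmem hPconv Tinv happrox
end
end

section
/- Let A be a closed, densely defined operator with compact resolvent on a complex Hilbert space H with 0 ∈ ρ(A), and let W be a Hilbert space continuously and densely embedded in H with D(A) ⊂ W. Let L > 0, d = L‖A⁻¹‖_{L(H,W)}, 0 < ε < 1/‖A⁻¹‖, L > ε and δ = ‖A⁻¹‖²ε/(1 − ‖A⁻¹‖ε). Then σ_ε(A) ∩ {z ∈ ℂ : |z| ≤ L − ε} ⊂ (B_δ(W(A⁻¹, d)))⁻¹. -/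
open Filter Topology Metric

noncomputable section

variable {H : Type*} [NormedAddCommGroup H] [InnerProductSpace ℂ H] [CompleteSpace H]

/-!
A point `λ` of `σ_ε(A)` has a unit approximate eigenvector `u ∈ D(A)`, `‖A u - λ u‖ < ε`: from
the size of the resolvent if `λ ∈ ρ(A)`, and as an exact eigenvector otherwise, by the Fredholm
alternative for the compact operator `A⁻¹`. Applying `A⁻¹` to `A u = λ u + r` gives
`u = λ A⁻¹ u + A⁻¹ r`, hence `λ ⟨A⁻¹ u, u⟩ = 1 - ⟨A⁻¹ r, u⟩`, while `1 = ‖u‖ ≤ |λ| ‖A⁻¹‖ + ‖A⁻¹‖ ‖r‖`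
bounds `|λ|` from below; together they put `λ⁻¹` within `δ` of `⟨A⁻¹ u, u⟩`. Finally `u = A⁻¹ (A u)`
with `‖A u‖ ≤ |λ| + ε ≤ L`, so `‖u‖_W ≤ L ‖A⁻¹‖_{L(H,W)} = d`.
-/

section Resolvent

variable {E : Type*} [NormedAddCommGroup E] [InnerProductSpace ℂ E] {A : E →ₗ.[ℂ] E}

namespace IsResolventAt

variable {B : E →L[ℂ] E}

theorem apply_map_of_zero (hB : IsResolventAt A 0 B) (x : A.domain) : B (A x) = x := by
  simpa using hB.1 x

theorem map_apply_of_zero (hB : IsResolventAt A 0 B) (y : E) :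
    ∃ hy : B y ∈ A.domain, A ⟨B y, hy⟩ = y := by
  simpa using hB.2 y

theorem eq_comp_one_add_smul {lam mu : ℂ} {R S : E →L[ℂ] E} (hR : IsResolventAt A lam R)
    (hS : IsResolventAt A mu S) : R = S ∘L (1 + (lam - mu) • R) := by
  ext y
  obtain ⟨hy, hAy⟩ := hR.2 y
  have hshift : A ⟨R y, hy⟩ - mu • R y = y + (lam - mu) • R y := by
    linear_combination (norm := module) hAy
  calc R y = S (A ⟨R y, hy⟩ - mu • R y) := (hS.1 ⟨R y, hy⟩).symm
    _ = _ := by rw [hshift]; simp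

theorem isCompactOperator {lam mu : ℂ} {R S : E →L[ℂ] E} (hR : IsResolventAt A lam R)
    (hS : IsResolventAt A mu S) (hSc : IsCompactOperator S) : IsCompactOperator R := by
  rw [hR.eq_comp_one_add_smul hS]
  exact hSc.comp_clm _

/-- On `D(A)`, `A - λ = (1 - λ B) A`, so `B (1 - λ B)⁻¹` inverts `A - λ`. -/
theorem mem_presolventSet_of_isUnit (hB : IsResolventAt A 0 B) {lam : ℂ}
    (hu : IsUnit (1 - lam • B)) : lam ∈ presolventSet A := by
  obtain ⟨u, hu⟩ := hu
  have hAx (x : A.domain) : A x - lam • (x : E) = (1 - lam • B) (A x) := by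
    simp [hB.apply_map_of_zero x]
  refine ⟨B * ↑u⁻¹, fun x => ?_, fun y => ?_⟩
  · rw [hAx, ← hu]
    change B ((↑u⁻¹ * ↑u : E →L[ℂ] E) (A x)) = x
    rw [u.inv_mul]
    exact hB.apply_map_of_zero x
  · obtain ⟨hy, hAy⟩ := hB.map_apply_of_zero ((↑u⁻¹ : E →L[ℂ] E) y)
    refine ⟨hy, ?_⟩
    have h : (↑u * ↑u⁻¹ : E →L[ℂ] E) y = y := by rw [u.mul_inv]; rfl
    rw [hu] at h
    simpa [hAy] using h

/-- Fredholm alternative for the compact operator `λ B` at `1`. -/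
theorem exists_eigenvector [CompleteSpace E] (hB : IsResolventAt A 0 B)
    (hBc : IsCompactOperator B) {lam : ℂ} (hlam : lam ∉ presolventSet A) :
    ∃ x : A.domain, (x : E) ≠ 0 ∧ A x = lam • (x : E) := by
  have hlamB : IsCompactOperator (lam • B) := hBc.smul lam
  obtain hev | hres := hlamB.hasEigenvalue_or_mem_resolventSet one_ne_zero
  · obtain ⟨y, hy⟩ := hev.exists_hasEigenvector
    obtain ⟨hBy, hAy⟩ := hB.map_apply_of_zero y
    have hyB : lam • B y = y := by simpa using hy.apply_eq_smul
    refine ⟨⟨B y, hBy⟩, fun h => hy.2 ?_, ?_⟩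
    · rw [← hyB]
      simp only at h
      simp [h]
    · rw [hAy, hyB]
  · rw [spectrum.mem_resolventSet_iff, map_one] at hres
    exact absurd (hB.mem_presolventSet_of_isUnit hres) hlam

theorem exists_approx_eigenvector {lam : ℂ} {R : E →L[ℂ] E} (hR : IsResolventAt A lam R)
    {ε : ℝ} (hε : 0 < ε) (hRn : 1 / ε < ‖R‖) :
    ∃ x : A.domain, (x : E) ≠ 0 ∧ ‖A x - lam • (x : E)‖ < ε * ‖(x : E)‖ := by
  obtain ⟨y, hy1, hRy⟩ := R.exists_lt_apply_of_lt_opNorm hRn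
  obtain ⟨hRy', hAy⟩ := hR.2 y
  refine ⟨⟨R y, hRy'⟩, ?_, ?_⟩
  · intro h
    simp only at h
    rw [h, norm_zero] at hRy
    linarith [one_div_pos.2 hε]
  · simp only [hAy]
    calc ‖y‖ < 1 := hy1
      _ < ε * ‖R y‖ := by rwa [← div_lt_iff₀' hε]

end IsResolventAt

theorem exists_unit_approx_eigenvector {lam : ℂ} {ε : ℝ} (x : A.domain) (hx : (x : E) ≠ 0)
    (h : ‖A x - lam • (x : E)‖ < ε * ‖(x : E)‖) :
    ∃ u : A.domain, ‖(u : E)‖ = 1 ∧ ‖A u - lam • (u : E)‖ < ε := by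
  have hxn : 0 < ‖(x : E)‖ := norm_pos_iff.2 hx
  refine ⟨(‖(x : E)‖⁻¹ : ℂ) • x, ?_, ?_⟩
  · simp [norm_smul, hxn.ne']
  · rw [LinearPMap.map_smul]
    simp only [Submodule.coe_smul]
    rw [smul_comm lam, ← smul_sub, norm_smul]
    simpa [hxn.ne', inv_mul_lt_iff₀ hxn, mul_comm] using h

theorem exists_unit_approx_eigenvector_of_mem_pseudoSpectrum [CompleteSpace E]
    {B : E →L[ℂ] E} (hB : IsResolventAt A 0 B) (hBc : IsCompactOperator B) {ε : ℝ}
    (hε : 0 < ε) {lam : ℂ} (hlam : lam ∈ pseudoSpectrum ε A) :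
    ∃ u : A.domain, ‖(u : E)‖ = 1 ∧ ‖A u - lam • (u : E)‖ < ε := by
  obtain ⟨x, hx, hAx⟩ : ∃ x : A.domain, (x : E) ≠ 0 ∧ ‖A x - lam • (x : E)‖ < ε * ‖(x : E)‖ := by
    by_cases hρ : lam ∈ presolventSet A
    · exact (isResolventAt_resolventOf hρ).exists_approx_eigenvector hε
        (hlam.resolve_left (not_not_intro hρ))
    · obtain ⟨x, hx, hAx⟩ := hB.exists_eigenvector hBc hρ
      exact ⟨x, hx, by simpa [hAx] using mul_pos hε (norm_pos_iff.2 hx)⟩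
  exact exists_unit_approx_eigenvector x hx hAx

end Resolvent

section NumericalRange

variable {E : Type*} [NormedAddCommGroup E] [InnerProductSpace ℂ E]

theorem dist_inv_inner_lt {B : E →L[ℂ] E} {u r : E} {lam : ℂ} {ε : ℝ} (hu : ‖u‖ = 1)
    (huB : u = lam • B u + B r) (hr : ‖r‖ < ε) (hε : ε < 1 / ‖B‖) :
    lam ≠ 0 ∧ dist lam⁻¹ (inner ℂ u (B u)) < ‖B‖ ^ 2 * ε / (1 - ‖B‖ * ε) := by
  have hBr : ‖B r‖ ≤ ‖B‖ * ‖r‖ := B.le_opNorm r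
  have hlow : 1 ≤ ‖lam‖ * ‖B‖ + ‖B‖ * ‖r‖ := by
    calc (1 : ℝ) = ‖lam • B u + B r‖ := by rw [← huB, hu]
      _ ≤ ‖lam‖ * ‖B u‖ + ‖B r‖ := by grw [norm_add_le, norm_smul]
      _ ≤ ‖lam‖ * ‖B‖ + ‖B‖ * ‖r‖ := by
        grw [B.le_opNorm u, hu, hBr, mul_one]
  have hBpos : 0 < ‖B‖ := by
    by_contra! h
    have : ‖B‖ = 0 := le_antisymm h (norm_nonneg B)
    norm_num [this] at hlow
  have hBε : ‖B‖ * ε < 1 := by rwa [lt_div_iff₀' hBpos] at hε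
  have hBr_lt : ‖B‖ * ‖r‖ < ‖B‖ * ε := mul_lt_mul_of_pos_left hr hBpos
  have hlam : 0 < ‖lam‖ := by nlinarith [norm_nonneg r]
  have hinner : lam⁻¹ - inner ℂ u (B u) = lam⁻¹ * inner ℂ u (B r) := by
    have h1 : (1 : ℂ) = lam * inner ℂ u (B u) + inner ℂ u (B r) := by
      rw [← inner_smul_right, ← inner_add_right, ← huB, inner_self_eq_norm_sq_to_K, hu]
      simp
    field_simp [norm_pos_iff.1 hlam]
    linear_combination h1
  refine ⟨norm_pos_iff.1 hlam, ?_⟩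
  rw [dist_eq_norm, hinner, norm_mul, norm_inv, inv_mul_eq_div,
    div_lt_div_iff₀ hlam (by linarith)]
  have hin : ‖inner ℂ u (B r)‖ ≤ ‖B‖ * ‖r‖ :=
    (norm_inner_le_norm _ _).trans (by rw [hu, one_mul]; exact hBr)
  have hBε0 : 0 ≤ ‖B‖ * ε := by nlinarith [norm_nonneg r]
  calc ‖inner ℂ u (B r)‖ * (1 - ‖B‖ * ε) ≤ ‖B‖ * ‖r‖ * (1 - ‖B‖ * ε) :=
        mul_le_mul_of_nonneg_right hin (by linarith)
    _ < ‖B‖ * ε * (1 - ‖B‖ * ‖r‖) := by linarith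
    _ ≤ ‖B‖ * ε * (‖lam‖ * ‖B‖) := mul_le_mul_of_nonneg_left (by linarith) hBε0
    _ = ‖B‖ ^ 2 * ε * ‖lam‖ := by ring

end NumericalRange

theorem pseudospectrum_inter_ball_subset_inv_nbhd_restricted_numRange_general
    (A : H →ₗ.[ℂ] H)
    {W : Type*} [NormedAddCommGroup W] [InnerProductSpace ℂ W]
    (ι : W →L[ℂ] H)
    (h0 : (0 : ℂ) ∈ presolventSet A)
    (hcpt : ∃ μ ∈ presolventSet A, IsCompactOperator (⇑(resolventOf A μ) : H → H))
    (Binv : H →L[ℂ] W) (hBinv : ∀ x, ι (Binv x) = resolventOf A 0 x)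
    (L : ℝ) (d : ℝ) (hd : d = L * ‖Binv‖)
    (ε : ℝ) (hε0 : 0 < ε) (hε : ε < 1 / ‖resolventOf A 0‖)
    (δ : ℝ)
    (hδ : δ = ‖resolventOf A 0‖ ^ 2 * ε / (1 - ‖resolventOf A 0‖ * ε)) :
    pseudoSpectrum ε A ∩ Metric.closedBall 0 (L - ε) ⊆
      invSet (nbhdSet δ {z : ℂ | ∃ w : W, ‖ι w‖ = 1 ∧ ‖w‖ ≤ d ∧
        z = (inner ℂ (ι w) (resolventOf A 0 (ι w)) : ℂ)}) := by
  set B := resolventOf A 0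
  have hB : IsResolventAt A 0 B := isResolventAt_resolventOf h0
  obtain ⟨μ, hμ, hμc⟩ := hcpt
  have hBc : IsCompactOperator B := hB.isCompactOperator (isResolventAt_resolventOf hμ) hμc
  rintro lam ⟨hlam, hball⟩
  rw [mem_closedBall_zero_iff] at hball
  obtain ⟨u, hu, hr⟩ := exists_unit_approx_eigenvector_of_mem_pseudoSpectrum hB hBc hε0 hlam
  set r := A u - lam • (u : H)
  have huB : (u : H) = lam • B u + B r := by
    rw [← map_smul, ← map_add, add_sub_cancel, hB.apply_map_of_zero]
  obtain ⟨hlam0, hdist⟩ := dist_inv_inner_lt hu huB hr hε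
  have hιw : ι (Binv (A u)) = u := by rw [hBinv, hB.apply_map_of_zero]
  have hAu : ‖A u‖ ≤ L := by
    calc ‖A u‖ = ‖lam • (u : H) + r‖ := by rw [add_sub_cancel]
      _ ≤ (L - ε) + ε := by grw [norm_add_le, norm_smul, hu, mul_one, hball, hr.le]
      _ = L := by ring
  have hw : ‖Binv (A u)‖ ≤ d := by
    grw [hd, Binv.le_opNorm, hAu, mul_comm]
  refine ⟨lam⁻¹, ⟨_, ⟨Binv (A u), by rw [hιw, hu], hw, rfl⟩, ?_⟩, inv_ne_zero hlam0,
    (inv_inv lam).symm⟩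
  rwa [hδ, hιw]

/-- Proposition 4.2(b). -/
theorem pseudospectrum_inter_ball_subset_inv_nbhd_restricted_numRange
    (A : H →ₗ.[ℂ] H)
    (hclosed : IsClosed (A.graph : Set (H × H)))
    (hdense : Dense (A.domain : Set H))
    {W : Type*} [NormedAddCommGroup W] [InnerProductSpace ℂ W] [CompleteSpace W]
    (ι : W →L[ℂ] H) (hιinj : Function.Injective ι) (hιdense : DenseRange ι)
    (hdom : (A.domain : Set H) ⊆ Set.range ι)
    (h0 : (0 : ℂ) ∈ presolventSet A)
    (hcpt : ∃ μ ∈ presolventSet A, IsCompactOperator (⇑(resolventOf A μ) : H → H))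
    (Binv : H →L[ℂ] W) (hBinv : ∀ x, ι (Binv x) = resolventOf A 0 x)
    (L : ℝ) (hL : 0 < L) (d : ℝ) (hd : d = L * ‖Binv‖)
    (ε : ℝ) (hε0 : 0 < ε) (hε : ε < 1 / ‖resolventOf A 0‖) (hLε : ε < L)
    (δ : ℝ)
    (hδ : δ = ‖resolventOf A 0‖ ^ 2 * ε / (1 - ‖resolventOf A 0‖ * ε)) :
    pseudoSpectrum ε A ∩ Metric.closedBall 0 (L - ε) ⊆
      invSet (nbhdSet δ {z : ℂ | ∃ w : W, ‖ι w‖ = 1 ∧ ‖w‖ ≤ d ∧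
        z = (inner ℂ (ι w) (resolventOf A 0 (ι w)) : ℂ)}) :=
  pseudospectrum_inter_ball_subset_inv_nbhd_restricted_numRange_general A ι h0 hcpt Binv hBinv L d
    hd ε hε0 hε δ hδ
end
end

section
/- Let A be a closed, densely defined operator on a complex Hilbert space H with 0 ∈ ρ(A) and D(A) ⊂ W ⊂ H for a continuously and densely embedded Hilbert space W, and suppose (P_n, A_n)_{n∈ℕ} approximates A uniformly. Let C₀ = sup_n (‖A_n⁻¹‖‖P_n‖ + 6‖A_n⁻¹‖‖P_n‖²). Then: (a) if d > 0, 0 < δ ≤ C₀/2 and n₀ ∈ ℕ are such that ‖A⁻¹ − A_n⁻¹P_n‖ + d·C₀·‖(I−P_n)|_W‖_{L(W,H)} < δ for all n ≥ n₀, then W(A⁻¹, d) ⊂ B_δ(W(A_n⁻¹)) for all n ≥ n₀; (b) if δ > 0 and n₀ ∈ ℕ are such that ‖A⁻¹ − A_n⁻¹P_n‖ < δ for all n ≥ n₀, then W(A_n⁻¹) ⊂ B_δ(W(A⁻¹)) for all n ≥ n₀. -/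
open Filter Topology Metric

noncomputable section

variable {H : Type*} [NormedAddCommGroup H] [InnerProductSpace ℂ H] [CompleteSpace H]

/-!
For (b), a unit vector `v ∈ U_n` satisfies `A_n⁻¹ v = A_n⁻¹ P_n v`, so `⟨A_n⁻¹ v, v⟩` lies within
`‖A⁻¹ - A_n⁻¹ P_n‖` of `⟨A⁻¹ v, v⟩ ∈ W(A⁻¹)`.

For (a), a unit vector `x = ι w` with `‖w‖_W ≤ d` satisfies `‖x - P_n x‖ ≤ d ‖(I - P_n)|_W‖ < 1/2`,
so `v = P_n x / ‖P_n x‖` is a unit vector of `U_n` with `‖x - v‖ ≤ 2 ‖x - P_n x‖`. Splitting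
`⟨A⁻¹ x, x⟩ - ⟨A_n⁻¹ P_n v, v⟩` into `⟨(A⁻¹ - A_n⁻¹ P_n) x, x⟩` and two terms of size at most
`‖A_n⁻¹ P_n‖ ‖x - v‖` gives the bound, because `‖P_n‖ ≥ 1` makes `4 ‖A_n⁻¹‖ ‖P_n‖ ≤ C₀`.
-/

section Normalize

variable {𝕜 E : Type*} [RCLike 𝕜] [NormedAddCommGroup E] [NormedSpace 𝕜 E]

theorem norm_sub_inv_norm_smul_le {x : E} (hx : ‖x‖ = 1) (y : E) :
    ‖x - (‖y‖⁻¹ : 𝕜) • y‖ ≤ 2 * ‖x - y‖ := by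
  have hy : ‖y - (‖y‖⁻¹ : 𝕜) • y‖ ≤ ‖x - y‖ := by
    rcases eq_or_ne y 0 with rfl | hy0
    · simp
    have hpos : 0 < ‖y‖ := norm_pos_iff.mpr hy0
    calc ‖y - (‖y‖⁻¹ : 𝕜) • y‖ = ‖((1 - ‖y‖⁻¹ : ℝ) : 𝕜) • y‖ := by
          simp [sub_smul]
      _ = |‖y‖ - ‖x‖| := by
          rw [norm_smul, RCLike.norm_ofReal, hx, ← abs_of_pos hpos, ← abs_mul, abs_of_pos hpos]
          congr 1; field_simp
      _ ≤ ‖x - y‖ := by rw [norm_sub_rev x y]; exact abs_norm_sub_norm_le y x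
  linarith [norm_sub_le_norm_sub_add_norm_sub x y ((‖y‖⁻¹ : 𝕜) • y)]

end Normalize

section InnerPerturbation

variable {𝕜 E : Type*} [RCLike 𝕜] [NormedAddCommGroup E] [InnerProductSpace 𝕜 E]

theorem norm_inner_apply_sub_inner_apply_le (R B : E →L[𝕜] E) {x v : E}
    (hx : ‖x‖ = 1) (hv : ‖v‖ = 1) :
    ‖inner 𝕜 x (R x) - inner 𝕜 v (B v)‖ ≤ ‖R - B‖ + 2 * ‖B‖ * ‖x - v‖ := by
  have hsplit : inner 𝕜 x (R x) - inner 𝕜 v (B v) =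
      inner 𝕜 x ((R - B) x) + inner 𝕜 (x - v) (B x) + inner 𝕜 v (B (x - v)) := by
    simp only [sub_apply, map_sub, inner_sub_left, inner_sub_right]
    ring
  have h₁ : ‖inner 𝕜 x ((R - B) x)‖ ≤ ‖R - B‖ := by
    simpa [hx] using norm_inner_le_norm (𝕜 := 𝕜) x ((R - B) x) |>.trans
      (mul_le_mul_of_nonneg_left ((R - B).le_opNorm x) (norm_nonneg x))
  have h₂ : ‖inner 𝕜 (x - v) (B x)‖ ≤ ‖B‖ * ‖x - v‖ := by
    calc ‖inner 𝕜 (x - v) (B x)‖ ≤ ‖x - v‖ * ‖B x‖ := norm_inner_le_norm _ _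
      _ ≤ ‖x - v‖ * ‖B‖ := by
          gcongr; simpa [hx] using B.le_opNorm x
      _ = ‖B‖ * ‖x - v‖ := mul_comm _ _
  have h₃ : ‖inner 𝕜 v (B (x - v))‖ ≤ ‖B‖ * ‖x - v‖ := by
    simpa [hv] using norm_inner_le_norm (𝕜 := 𝕜) v (B (x - v)) |>.trans
      (mul_le_mul_of_nonneg_left (B.le_opNorm (x - v)) (norm_nonneg v))
  rw [hsplit]
  linarith [norm_add₃_le (a := inner 𝕜 x ((R - B) x)) (b := inner 𝕜 (x - v) (B x))
    (c := inner 𝕜 v (B (x - v)))]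

end InnerPerturbation

theorem le_sSup_range_of_pos {ι : Type*} {f : ι → ℝ} (h : 0 < sSup (Set.range f)) (i : ι) :
    f i ≤ sSup (Set.range f) := by
  have hbdd : BddAbove (Set.range f) := by
    by_contra hb
    rw [Real.sSup_of_not_bddAbove hb] at h
    exact lt_irrefl 0 h
  exact le_csSup hbdd ⟨i, rfl⟩

section CompProj

variable {𝕜 E : Type*} [NontriviallyNormedField 𝕜] [NormedAddCommGroup E] [NormedSpace 𝕜 E]
  {U : Submodule 𝕜 E} {P : E →L[𝕜] E}

theorem one_le_opNorm_of_apply_eq_self {u : E} (hu : u ≠ 0) (hPu : P u = u) : 1 ≤ ‖P‖ := by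
  have h : 1 * ‖u‖ ≤ ‖P‖ * ‖u‖ := by simpa [hPu] using P.le_opNorm u
  exact le_of_mul_le_mul_right h (norm_pos_iff.mpr hu)

variable (hPmem : ∀ x, P x ∈ U)

/-- The paper's `A_n⁻¹ P_n`, for `S = A_n⁻¹`. -/
def compProj (S : U →L[𝕜] U) : E →L[𝕜] E :=
  U.subtypeL.comp (S.comp (P.codRestrict U hPmem))

theorem norm_compProj_le (S : U →L[𝕜] U) : ‖compProj hPmem S‖ ≤ ‖S‖ * ‖P‖ := by
  refine ContinuousLinearMap.opNorm_le_bound _ (by positivity) fun x => ?_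
  calc ‖compProj hPmem S x‖ = ‖S (P.codRestrict U hPmem x)‖ := rfl
    _ ≤ ‖S‖ * ‖P x‖ := S.le_opNorm _
    _ ≤ ‖S‖ * (‖P‖ * ‖x‖) := by gcongr; exact P.le_opNorm x
    _ = ‖S‖ * ‖P‖ * ‖x‖ := (mul_assoc _ _ _).symm

theorem compProj_apply_coe (hPproj : ∀ x ∈ U, P x = x) (S : U →L[𝕜] U) (u : U) :
    compProj hPmem S u = S u := by
  have hu : P.codRestrict U hPmem u = u := Subtype.ext (hPproj u u.2)
  simp only [compProj, ContinuousLinearMap.comp_apply, hu]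
  rfl

end CompProj

section NumRange

variable {E : Type*} [NormedAddCommGroup E] [InnerProductSpace ℂ E]
  {U : Submodule ℂ E} {P : E →L[ℂ] E} (hPmem : ∀ x, P x ∈ U)
  (hPproj : ∀ x ∈ U, P x = x)
include hPproj

theorem inner_mem_nbhdSet_numRangeSub (R : E →L[ℂ] E) (S : U →L[ℂ] U) {x : E} (hx : ‖x‖ = 1)
    (hxP : ‖x - P x‖ < 1) {δ : ℝ}
    (hδ : ‖R - compProj hPmem S‖ + (‖S‖ * ‖P‖ + 6 * ‖S‖ * ‖P‖ ^ 2) * ‖x - P x‖ < δ) :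
    inner ℂ x (R x) ∈ nbhdSet δ (numRangeSub S) := by
  have hPx : P x ≠ 0 := fun h => by simp [h, hx] at hxP
  set B := compProj hPmem S
  have hB : 4 * ‖B‖ ≤ ‖S‖ * ‖P‖ + 6 * ‖S‖ * ‖P‖ ^ 2 := by
    have hP := one_le_opNorm_of_apply_eq_self hPx (hPproj _ (hPmem x))
    have hBle : ‖B‖ ≤ ‖S‖ * ‖P‖ := norm_compProj_le hPmem S
    have hSP : 0 ≤ ‖S‖ * ‖P‖ := by positivity
    nlinarith [mul_nonneg hSP (by linarith : (0 : ℝ) ≤ 2 * ‖P‖ - 1)]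
  set v : U := (‖P x‖⁻¹ : ℂ) • ⟨P x, hPmem x⟩
  have hv : ‖(v : E)‖ = 1 := norm_smul_inv_norm hPx
  refine ⟨inner ℂ (v : E) (S v : E), ⟨v, hv, rfl⟩, ?_⟩
  rw [dist_eq_norm, ← compProj_apply_coe hPmem hPproj]
  calc _ ≤ ‖R - B‖ + 2 * ‖B‖ * ‖x - v‖ := norm_inner_apply_sub_inner_apply_le _ _ hx hv
    _ ≤ ‖R - B‖ + 2 * ‖B‖ * (2 * ‖x - P x‖) := by
        gcongr; exact norm_sub_inv_norm_smul_le hx (P x)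
    _ ≤ ‖R - B‖ + (‖S‖ * ‖P‖ + 6 * ‖S‖ * ‖P‖ ^ 2) * ‖x - P x‖ := by
        nlinarith [norm_nonneg (x - P x)]
    _ < δ := hδ

theorem numRangeSub_subset_nbhdSet (R : E →L[ℂ] E) (S : U →L[ℂ] U) {δ : ℝ}
    (hδ : ‖R - compProj hPmem S‖ < δ) : numRangeSub S ⊆ nbhdSet δ (numRange R) := by
  rintro _ ⟨v, hv, rfl⟩
  refine ⟨inner ℂ (v : E) (R v), ⟨v, hv, rfl⟩, ?_⟩
  rw [dist_comm, dist_eq_norm, ← compProj_apply_coe hPmem hPproj]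
  have h := norm_inner_apply_sub_inner_apply_le R (compProj hPmem S) hv hv
  rw [sub_self, norm_zero, mul_zero, add_zero] at h
  exact h.trans_lt hδ

end NumRange

theorem restricted_numRange_nbhd_approx_of_uniform_general
    (A : H →ₗ.[ℂ] H)
    {W : Type*} [NormedAddCommGroup W] [InnerProductSpace ℂ W]
    (ι : W →L[ℂ] H)
    (U : ℕ → Submodule ℂ H)
    (P : ℕ → H →L[ℂ] H)
    (hPmem : ∀ n x, P n x ∈ U n)
    (hPproj : ∀ n, ∀ x ∈ U n, P n x = x)
    (Tinv : ∀ n, ↥(U n) →L[ℂ] ↥(U n))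
    (C₀ : ℝ)
    (hC₀ : C₀ = sSup (Set.range fun n =>
      ‖Tinv n‖ * ‖P n‖ + 6 * ‖Tinv n‖ * ‖P n‖ ^ 2)) :
    (∀ d : ℝ, 0 < d → ∀ δ : ℝ, 0 < δ → δ ≤ C₀ / 2 → ∀ n₀ : ℕ,
      (∀ n ≥ n₀,
        ‖resolventOf A 0 -
            (U n).subtypeL.comp
              ((Tinv n).comp ((P n).codRestrict (U n) (hPmem n)))‖ +
          d * C₀ * ‖ι - (P n).comp ι‖ < δ) →
      ∀ n ≥ n₀,
        {z : ℂ | ∃ w : W, ‖ι w‖ = 1 ∧ ‖w‖ ≤ d ∧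
            z = (inner ℂ (ι w) (resolventOf A 0 (ι w)) : ℂ)} ⊆
          nbhdSet δ (numRangeSub (Tinv n))) ∧
    (∀ δ : ℝ, 0 < δ → ∀ n₀ : ℕ,
      (∀ n ≥ n₀,
        ‖resolventOf A 0 -
            (U n).subtypeL.comp
              ((Tinv n).comp ((P n).codRestrict (U n) (hPmem n)))‖ < δ) →
      ∀ n ≥ n₀, numRangeSub (Tinv n) ⊆ nbhdSet δ (numRange (resolventOf A 0))) := by
  refine ⟨?_, fun δ _ n₀ hsmall n hn =>
    numRangeSub_subset_nbhdSet (hPmem n) (hPproj n) _ _ (hsmall n hn)⟩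
  rintro d hd δ hδ hδC₀ n₀ hsmall n hn _ ⟨w, hw, hwd, rfl⟩
  set η := ‖ι - (P n).comp ι‖
  have hsmall : ‖resolventOf A 0 - compProj (hPmem n) (Tinv n)‖ + d * C₀ * η < δ := hsmall n hn
  have hC₀pos : 0 < C₀ := by linarith
  -- junk value: an unbounded family has `sSup = 0`, which `0 < δ ≤ C₀ / 2` rules out
  have hC₀n : ‖Tinv n‖ * ‖P n‖ + 6 * ‖Tinv n‖ * ‖P n‖ ^ 2 ≤ C₀ :=
    hC₀ ▸ le_sSup_range_of_pos (hC₀ ▸ hC₀pos) n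
  have hxPx : ‖ι w - P n (ι w)‖ ≤ η * d :=
    calc ‖ι w - P n (ι w)‖ = ‖(ι - (P n).comp ι) w‖ := rfl
      _ ≤ η * ‖w‖ := ContinuousLinearMap.le_opNorm _ _
      _ ≤ η * d := by gcongr
  have hηd : η * d < 1 / 2 := by
    have hε : 0 ≤ ‖resolventOf A 0 - compProj (hPmem n) (Tinv n)‖ := norm_nonneg _
    exact lt_of_mul_lt_mul_left (by nlinarith : C₀ * (η * d) < C₀ * (1 / 2)) hC₀pos.le
  refine inner_mem_nbhdSet_numRangeSub (hPmem n) (hPproj n) _ _ hw (by linarith) ?_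
  calc _ ≤ ‖resolventOf A 0 - compProj (hPmem n) (Tinv n)‖ + C₀ * (η * d) := by gcongr
    _ < δ := by linarith

/-- Lemma 4.5. -/
theorem restricted_numRange_nbhd_approx_of_uniform
    (A : H →ₗ.[ℂ] H)
    (hclosed : IsClosed (A.graph : Set (H × H)))
    (hdense : Dense (A.domain : Set H))
    (h0 : (0 : ℂ) ∈ presolventSet A)
    {W : Type*} [NormedAddCommGroup W] [InnerProductSpace ℂ W] [CompleteSpace W]
    (ι : W →L[ℂ] H) (hιinj : Function.Injective ι) (hιdense : DenseRange ι)
    (hdom : (A.domain : Set H) ⊆ Set.range ι)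
    (U : ℕ → Submodule ℂ H) (hUfin : ∀ n, FiniteDimensional ℂ (U n))
    (P : ℕ → H →L[ℂ] H)
    (hPmem : ∀ n x, P n x ∈ U n)
    (hPproj : ∀ n, ∀ x ∈ U n, P n x = x)
    (hPbdd : ∃ C : ℝ, ∀ n, ‖P n‖ ≤ C)
    (hPW : Tendsto (fun n => ‖ι - (P n).comp ι‖) atTop (𝓝 0))
    (T : ∀ n, ↥(U n) →L[ℂ] ↥(U n)) (Tinv : ∀ n, ↥(U n) →L[ℂ] ↥(U n))
    (hTinv : ∀ n, (∀ u, Tinv n (T n u) = u) ∧ ∀ u, T n (Tinv n u) = u)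
    (hunif : Tendsto (fun n =>
      ‖resolventOf A 0 -
        (U n).subtypeL.comp ((Tinv n).comp ((P n).codRestrict (U n) (hPmem n)))‖)
      atTop (𝓝 0))
    (C₀ : ℝ)
    (hC₀ : C₀ = sSup (Set.range fun n =>
      ‖Tinv n‖ * ‖P n‖ + 6 * ‖Tinv n‖ * ‖P n‖ ^ 2)) :
    (∀ d : ℝ, 0 < d → ∀ δ : ℝ, 0 < δ → δ ≤ C₀ / 2 → ∀ n₀ : ℕ,
      (∀ n ≥ n₀,
        ‖resolventOf A 0 -
            (U n).subtypeL.comp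
              ((Tinv n).comp ((P n).codRestrict (U n) (hPmem n)))‖ +
          d * C₀ * ‖ι - (P n).comp ι‖ < δ) →
      ∀ n ≥ n₀,
        {z : ℂ | ∃ w : W, ‖ι w‖ = 1 ∧ ‖w‖ ≤ d ∧
            z = (inner ℂ (ι w) (resolventOf A 0 (ι w)) : ℂ)} ⊆
          nbhdSet δ (numRangeSub (Tinv n))) ∧
    (∀ δ : ℝ, 0 < δ → ∀ n₀ : ℕ,
      (∀ n ≥ n₀,
        ‖resolventOf A 0 -
            (U n).subtypeL.comp
              ((Tinv n).comp ((P n).codRestrict (U n) (hPmem n)))‖ < δ) →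
      ∀ n ≥ n₀, numRangeSub (Tinv n) ⊆ nbhdSet δ (numRange (resolventOf A 0))) :=
  restricted_numRange_nbhd_approx_of_uniform_general A ι U P hPmem hPproj Tinv C₀ hC₀
end
end

section
/- Let H be a complex Hilbert space, A : D(A) ⊂ H → H a closed, densely defined operator with 0 ∈ ρ(A), and B, D ∈ L(H) with 0 ∈ ρ(D). Assume there exist γ_A, γ_D > 0 with Re⟨Ax, x⟩ ≥ γ_A‖x‖² for all x ∈ D(A) and Re⟨Dx, x⟩ ≤ −γ_D‖x‖² for all x ∈ H. Let 𝒜 be the block operator matrix 𝒜 = [[A, B], [B*, D]] on H × H with domain D(𝒜) = D(A) × H. Then {λ ∈ ℂ : −γ_D < Re λ < γ_A} ⊂ ρ(𝒜), and for every λ with −γ_D < Re λ < γ_A one has ‖(𝒜 − λ)⁻¹‖ ≤ 1/min{γ_A − Re λ, γ_D + Re λ}. -/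
open Filter Topology Metric

noncomputable section

variable {H : Type*} [NormedAddCommGroup H] [InnerProductSpace ℂ H] [CompleteSpace H]

/-! For `Re λ < γA` the operator `A - λ` is uniformly accretive with constant `γA - Re λ`, so a
resolvent of `A` at such `λ` has norm at most `1 / (γA - Re λ)`. By a Neumann series, the points of
the half-plane `Re λ < γA` lying in `ρ(A)` form a relatively open and closed subset of it; it
contains `0`, hence it is the whole half-plane.

For such `λ`, `RA = (A - λ)⁻¹` is accretive, so the Schur complement `D - λ - B* RA B` satisfies
`Re ⟨y, (D - λ - B* RA B) y⟩ ≤ -(γD + Re λ) ‖y‖²`; it is therefore invertible, and `𝒜 - λ` is onto.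
With `J = diag(1, -1)` the cross terms `⟨x, B y⟩` and `⟨y, B* x⟩` cancel in
`Re ⟨J p, (𝒜 - λ) p⟩ ≥ min (γA - Re λ) (γD + Re λ) ‖p‖²`, and this lower bound makes `𝒜 - λ`
injective and bounds its inverse. -/

section InnerProduct

variable {𝕜 E : Type*} [RCLike 𝕜] [NormedAddCommGroup E] [InnerProductSpace 𝕜 E]

open RCLike in
lemma re_inner_sub_smul_self (x a : E) (c : 𝕜) :
    re (inner 𝕜 x (a - c • x)) = re (inner 𝕜 x a) - re c * ‖x‖ ^ 2 := by
  rw [inner_sub_right, inner_smul_right, inner_self_eq_norm_sq_to_K, map_sub, ← ofReal_pow,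
    re_mul_ofReal]

open RCLike in
lemma mul_norm_le_of_mul_norm_sq_le_re_inner {γ : ℝ} {x y : E}
    (h : γ * ‖x‖ ^ 2 ≤ re (inner 𝕜 x y)) : γ * ‖x‖ ≤ ‖y‖ := by
  rcases (norm_nonneg x).eq_or_lt with hx | hx
  · simp [← hx]
  · refine le_of_mul_le_mul_right ?_ hx
    calc γ * ‖x‖ * ‖x‖ = γ * ‖x‖ ^ 2 := by ring
      _ ≤ ‖x‖ * ‖y‖ := h.trans ((re_le_norm _).trans (norm_inner_le_norm x y))
      _ = ‖y‖ * ‖x‖ := mul_comm _ _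

end InnerProduct

lemma exists_clm_comp_eq_of_surjective {𝕜 M E F : Type*} [NontriviallyNormedField 𝕜]
    [AddCommGroup M] [Module 𝕜 M] [NormedAddCommGroup E] [NormedSpace 𝕜 E]
    [NormedAddCommGroup F] [NormedSpace 𝕜 F] (L : M →ₗ[𝕜] F) (ι : M →ₗ[𝕜] E)
    (hL : Function.Surjective L) (hι : Function.Injective ι) {γ : ℝ} (hγ : 0 < γ)
    (hbound : ∀ m, γ * ‖ι m‖ ≤ ‖L m‖) :
    ∃ R : F →L[𝕜] E, ‖R‖ ≤ 1 / γ ∧ ∀ m, R (L m) = ι m := by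
  have hinj : Function.Injective L := by
    refine (injective_iff_map_eq_zero L).2 fun m hm => (map_eq_zero_iff ι hι).1 ?_
    have := hbound m
    rw [hm, norm_zero] at this
    exact norm_le_zero_iff.1 (nonpos_of_mul_nonpos_right this hγ)
  let e := LinearEquiv.ofBijective L ⟨hinj, hL⟩
  have hLe : ∀ f, L (e.symm f) = f := e.apply_symm_apply
  have hR : ∀ f, ‖ι (e.symm f)‖ ≤ 1 / γ * ‖f‖ := fun f => by
    rw [one_div_mul_eq_div, le_div_iff₀' hγ]
    simpa only [hLe] using hbound (e.symm f)
  exact ⟨(ι ∘ₗ e.symm.toLinearMap).mkContinuous (1 / γ) hR,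
    LinearMap.mkContinuous_norm_le _ (by positivity) _,
    fun m => congrArg ι (e.symm_apply_apply m)⟩

section Resolvent

variable {E : Type*} [NormedAddCommGroup E] [InnerProductSpace ℂ E] {A : E →ₗ.[ℂ] E} {γA : ℝ}

def IsUniformlyAccretive (A : E →ₗ.[ℂ] E) (γ : ℝ) : Prop :=
  ∀ x : A.domain, γ * ‖(x : E)‖ ^ 2 ≤ (inner ℂ (x : E) (A x)).re

namespace IsResolventAt

variable {lam : ℂ} {R : E →L[ℂ] E}

lemma mul_norm_sq_le_re_inner (hacc : IsUniformlyAccretive A γA) (hR : IsResolventAt A lam R)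
    (y : E) :
    (γA - lam.re) * ‖R y‖ ^ 2 ≤ (inner ℂ (R y) y).re := by
  obtain ⟨hy, hAy⟩ := hR.2 y
  have h := re_inner_sub_smul_self (𝕜 := ℂ) (R y) (A ⟨R y, hy⟩) lam
  rw [hAy] at h
  simp only [RCLike.re_to_complex] at h
  linarith [hacc ⟨R y, hy⟩]

lemma norm_le (hacc : IsUniformlyAccretive A γA)
    (hlam : lam.re < γA) (hR : IsResolventAt A lam R) : ‖R‖ ≤ 1 / (γA - lam.re) := by
  have hpos : 0 < γA - lam.re := sub_pos.2 hlam
  refine R.opNorm_le_bound (by positivity) fun y => ?_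
  rw [one_div_mul_eq_div, le_div_iff₀' hpos]
  exact mul_norm_le_of_mul_norm_sq_le_re_inner (𝕜 := ℂ) (hR.mul_norm_sq_le_re_inner hacc y)

lemma re_inner_nonneg (hacc : IsUniformlyAccretive A γA)
    (hlam : lam.re ≤ γA) (hR : IsResolventAt A lam R) (y : E) :
    0 ≤ (inner ℂ y (R y)).re := by
  rw [← RCLike.re_to_complex, inner_re_symm]
  exact (mul_nonneg (sub_nonneg.2 hlam) (sq_nonneg _)).trans (hR.mul_norm_sq_le_re_inner hacc y)

lemma mem_presolventSet_of_norm_mul_lt [CompleteSpace E] {μ : ℂ} (hR : IsResolventAt A μ R)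
    (h : ‖lam - μ‖ * ‖R‖ < 1) : lam ∈ presolventSet A := by
  set U := Units.oneSub ((lam - μ) • R) (by rwa [norm_smul])
  have hU : ∀ z, (U : E →L[ℂ] E) z = z - (lam - μ) • R z := fun _ => rfl
  have hshift : ∀ x : A.domain, A x - lam • (x : E) = (A x - μ • (x : E)) - (lam - μ) • (x : E) :=
    fun x => by rw [sub_smul]; abel
  have hcomm : Commute R ↑U⁻¹ :=
    ((Commute.one_right R).sub_right ((Commute.refl R).smul_right _)).units_inv_right
  refine ⟨↑U⁻¹ * R, fun x => ?_, fun y => ?_⟩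
  · calc (↑U⁻¹ * R) (A x - lam • (x : E)) = (↑U⁻¹ : E →L[ℂ] E) ((U : E →L[ℂ] E) x) := by
          rw [mul_apply_eq_comp, hshift, map_sub, hR.1, map_smul, hU]
      _ = x := by rw [← mul_apply_eq_comp, U.inv_mul, one_apply_eq_self]
  · obtain ⟨hmem, hAz⟩ := hR.2 ((↑U⁻¹ : E →L[ℂ] E) y)
    have happ : (↑U⁻¹ * R) y = R ((↑U⁻¹ : E →L[ℂ] E) y) := by rw [← hcomm.eq]; rfl
    rw [happ]
    refine ⟨hmem, ?_⟩
    calc _ = (U : E →L[ℂ] E) ((↑U⁻¹ : E →L[ℂ] E) y) := by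
          rw [hshift ⟨_, hmem⟩, hU]; exact congrArg (· - _) hAz
      _ = y := by rw [← mul_apply_eq_comp, U.mul_inv, one_apply_eq_self]

end IsResolventAt

lemma ball_subset_presolventSet [CompleteSpace E] (hacc : IsUniformlyAccretive A γA) {μ : ℂ}
    (hμ : μ ∈ presolventSet A) (hre : μ.re < γA) :
    ball μ (γA - μ.re) ⊆ presolventSet A := by
  obtain ⟨R, hR⟩ := hμ
  intro lam hlam
  have hpos : 0 < γA - μ.re := sub_pos.2 hre
  refine hR.mem_presolventSet_of_norm_mul_lt ?_
  calc ‖lam - μ‖ * ‖R‖ ≤ ‖lam - μ‖ * (1 / (γA - μ.re)) :=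
        mul_le_mul_of_nonneg_left (hR.norm_le hacc hre) (norm_nonneg _)
    _ < 1 := by rwa [mul_one_div, div_lt_one hpos, ← dist_eq_norm]

lemma setOf_re_lt_subset_presolventSet [CompleteSpace E] (hγA : 0 < γA)
    (hacc : IsUniformlyAccretive A γA) (h0 : (0 : ℂ) ∈ presolventSet A) :
    {lam : ℂ | lam.re < γA} ⊆ presolventSet A := by
  set u := {lam : ℂ | lam.re < γA} ∩ presolventSet A
  have hball : ∀ μ ∈ u, ball μ (γA - μ.re) ⊆ u := fun μ hμ lam hlam => by
    refine ⟨?_, ball_subset_presolventSet hacc hμ.2 hμ.1 hlam⟩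
    have := (Complex.re_le_norm (lam - μ)).trans_lt (mem_ball_iff_norm.1 hlam)
    simp only [Set.mem_ofPred_eq, Complex.sub_re] at this ⊢
    linarith
  have hopen : IsOpen u := Metric.isOpen_iff.2 fun μ hμ => ⟨_, sub_pos.2 hμ.1, hball μ hμ⟩
  refine fun lam hlam => ((convex_halfSpace_re_lt γA).isPreconnected.subset_of_closure_inter_subset
    hopen ⟨0, by simpa using hγA, by simpa using hγA, h0⟩ ?_ hlam).2
  rintro z ⟨hcl, hre⟩
  obtain ⟨μ, hμ, hdist⟩ := Metric.mem_closure_iff.1 hcl _ (half_pos (sub_pos.2 hre))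
  refine hball μ hμ ?_
  have := (Complex.re_le_norm (μ - z)).trans_lt (by rwa [← dist_eq_norm, dist_comm])
  simp only [Set.mem_ofPred_eq, Complex.sub_re] at this hre
  rw [mem_ball]
  linarith

end Resolvent

section Block

variable {A : H →ₗ.[ℂ] H} {B D : H →L[ℂ] H} {lam : ℂ} {γA γD : ℝ}

open ContinuousLinearMap (adjoint)

-- `D - λ - B* (A - λ)⁻¹ B`, with `RA` in the role of `(A - λ)⁻¹`.
def schurComplement (B D RA : H →L[ℂ] H) (lam : ℂ) : H →L[ℂ] H :=
  D - lam • 1 - adjoint B ∘L RA ∘L B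

lemma isUnit_schurComplement (hacc : IsUniformlyAccretive A γA)
    (haccD : ∀ x : H, (inner ℂ x (D x)).re ≤ -(γD * ‖x‖ ^ 2))
    (hlam1 : -γD < lam.re) (hlam2 : lam.re ≤ γA) {RA : H →L[ℂ] H}
    (hRA : IsResolventAt A lam RA) : IsUnit (schurComplement B D RA lam) := by
  have hc : 0 < γD + lam.re := by linarith
  suffices IsUnit (-schurComplement B D RA lam) by simpa using this.neg
  refine ContinuousLinearMap.isUnit_of_forall_le_norm_inner_map _ (c := ⟨γD + lam.re, hc.le⟩)
    hc fun y => ?_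
  have hSy : -schurComplement B D RA lam y = (adjoint B (RA (B y)) - D y) - (-lam) • y := by
    simp only [schurComplement, sub_apply, smul_apply,
      ContinuousLinearMap.comp_apply, one_apply_eq_self, neg_smul]
    abel
  have hS : (inner ℂ y (-schurComplement B D RA lam y)).re
      = lam.re * ‖y‖ ^ 2 - (inner ℂ y (D y)).re + (inner ℂ (B y) (RA (B y))).re := by
    have h := re_inner_sub_smul_self (𝕜 := ℂ) y (adjoint B (RA (B y)) - D y) (-lam)
    rw [← hSy, inner_sub_right, ContinuousLinearMap.adjoint_inner_right] at h
    simp only [RCLike.re_to_complex, Complex.sub_re, Complex.neg_re] at h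
    linarith
  calc ‖y‖ ^ 2 * (γD + lam.re) ≤ (inner ℂ y (-schurComplement B D RA lam y)).re := by
        rw [hS]; nlinarith [haccD y, hRA.re_inner_nonneg hacc hlam2 (B y)]
    _ = (inner ℂ (-schurComplement B D RA lam y) y).re := inner_re_symm (𝕜 := ℂ) _ _
    _ ≤ ‖inner ℂ (-schurComplement B D RA lam y) y‖ := Complex.re_le_norm _

-- `𝒜 - λ` as a linear map on `D(A) × H`.
def blockSub (A : H →ₗ.[ℂ] H) (B D : H →L[ℂ] H) (lam : ℂ) :
    A.domain × H →ₗ[ℂ] WithLp 2 (H × H) :=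
  (WithLp.linearEquiv 2 ℂ (H × H)).symm.toLinearMap ∘ₗ
    ((A.toFun ∘ₗ LinearMap.fst ℂ _ H + (B : H →ₗ[ℂ] H) ∘ₗ LinearMap.snd ℂ A.domain H
        - lam • (A.domain.subtype ∘ₗ LinearMap.fst ℂ _ H)).prod
      ((adjoint B : H →ₗ[ℂ] H) ∘ₗ A.domain.subtype ∘ₗ LinearMap.fst ℂ _ H
        + (D : H →ₗ[ℂ] H) ∘ₗ LinearMap.snd ℂ A.domain H - lam • LinearMap.snd ℂ A.domain H))

@[simp]
lemma blockSub_apply (x : A.domain) (y : H) :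
    blockSub A B D lam (x, y) =
      WithLp.toLp 2 (A x + B y - lam • (x : H), adjoint B x + D y - lam • y) :=
  rfl

lemma re_inner_blockSub (x : A.domain) (y : H) :
    (inner ℂ (WithLp.toLp 2 ((x : H), -y)) (blockSub A B D lam (x, y))).re
      = (inner ℂ (x : H) (A x)).re - (inner ℂ y (D y)).re
        - lam.re * ‖(x : H)‖ ^ 2 + lam.re * ‖y‖ ^ 2 := by
  have h1 := re_inner_sub_smul_self (𝕜 := ℂ) (x : H) (A x + B y) lam
  have h2 := re_inner_sub_smul_self (𝕜 := ℂ) y (adjoint B x + D y) lam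
  rw [inner_add_right, map_add] at h1
  rw [inner_add_right, map_add, ContinuousLinearMap.adjoint_inner_right, inner_re_symm (B y)] at h2
  simp only [RCLike.re_to_complex] at h1 h2
  simp only [blockSub_apply, WithLp.prod_inner_apply, inner_neg_left, Complex.add_re,
    Complex.neg_re]
  linarith

lemma min_mul_norm_le_norm_blockSub (hacc : IsUniformlyAccretive A γA)
    (haccD : ∀ x : H, (inner ℂ x (D x)).re ≤ -(γD * ‖x‖ ^ 2)) (p : A.domain × H) :
    min (γA - lam.re) (γD + lam.re) * ‖WithLp.toLp 2 ((p.1 : H), p.2)‖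
      ≤ ‖blockSub A B D lam p‖ := by
  obtain ⟨x, y⟩ := p
  have hnorm : ‖WithLp.toLp 2 ((x : H), -y)‖ = ‖WithLp.toLp 2 ((x : H), y)‖ := by
    simp [WithLp.prod_norm_eq_of_L2]
  rw [← hnorm]
  refine mul_norm_le_of_mul_norm_sq_le_re_inner (𝕜 := ℂ) ?_
  rw [WithLp.prod_norm_sq_eq_of_L2, RCLike.re_to_complex, re_inner_blockSub]
  simp only [WithLp.toLp_fst, WithLp.toLp_snd, norm_neg]
  have hx := mul_le_mul_of_nonneg_right (min_le_left (γA - lam.re) (γD + lam.re))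
    (sq_nonneg ‖(x : H)‖)
  have hy := mul_le_mul_of_nonneg_right (min_le_right (γA - lam.re) (γD + lam.re))
    (sq_nonneg ‖y‖)
  linarith [hacc x, haccD y]

lemma blockSub_surjective {RA : H →L[ℂ] H} (hRA : IsResolventAt A lam RA)
    (hS : Function.Surjective (schurComplement B D RA lam)) :
    Function.Surjective (blockSub A B D lam) := by
  intro p
  obtain ⟨⟨u, v⟩, rfl⟩ := WithLp.toLp_surjective 2 p
  obtain ⟨y, hy⟩ := hS (v - adjoint B (RA u))
  obtain ⟨hx, hAx⟩ := hRA.2 (u - B y)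
  refine ⟨(⟨RA (u - B y), hx⟩, y), ?_⟩
  rw [blockSub_apply]
  refine congrArg (WithLp.toLp 2) (Prod.ext ?_ ?_) <;> dsimp only
  · rw [add_sub_right_comm, hAx, sub_add_cancel]
  · have hSy : schurComplement B D RA lam y = D y - lam • y - adjoint B (RA (B y)) := by
      simp [schurComplement]
    rw [← eq_sub_iff_add_eq.1 hy, hSy, map_sub, map_sub]
    abel

end Block

theorem blockOperator_gap_and_resolvent_bound_general
    (A : H →ₗ.[ℂ] H)
    (h0A : (0 : ℂ) ∈ presolventSet A)
    (B D : H →L[ℂ] H)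
    (γA γD : ℝ) (hγA : 0 < γA)
    (haccA : ∀ x : A.domain, γA * ‖(x : H)‖ ^ 2 ≤ (inner ℂ (x : H) (A x) : ℂ).re)
    (haccD : ∀ x : H, (inner ℂ x (D x) : ℂ).re ≤ -(γD * ‖x‖ ^ 2))
    (lam : ℂ) (hlam1 : -γD < lam.re) (hlam2 : lam.re < γA) :
    ∃ R : WithLp 2 (H × H) →L[ℂ] WithLp 2 (H × H),
      ‖R‖ ≤ 1 / min (γA - lam.re) (γD + lam.re) ∧
      (∀ (x : A.domain) (y : H),
        R ((WithLp.equiv 2 (H × H)).symm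
            (A x + B y - lam • (x : H),
             ContinuousLinearMap.adjoint B (x : H) + D y - lam • y)) =
          (WithLp.equiv 2 (H × H)).symm ((x : H), y)) ∧
      ∀ p : WithLp 2 (H × H),
        ∃ hx : (WithLp.equiv 2 (H × H) (R p)).1 ∈ A.domain,
          A ⟨(WithLp.equiv 2 (H × H) (R p)).1, hx⟩ +
              B (WithLp.equiv 2 (H × H) (R p)).2 -
              lam • (WithLp.equiv 2 (H × H) (R p)).1 =
            (WithLp.equiv 2 (H × H) p).1 ∧
          ContinuousLinearMap.adjoint B (WithLp.equiv 2 (H × H) (R p)).1 +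
              D (WithLp.equiv 2 (H × H) (R p)).2 -
              lam • (WithLp.equiv 2 (H × H) (R p)).2 =
            (WithLp.equiv 2 (H × H) p).2 := by
  have hγ : 0 < min (γA - lam.re) (γD + lam.re) := lt_min (sub_pos.2 hlam2) (by linarith)
  obtain ⟨RA, hRA⟩ := setOf_re_lt_subset_presolventSet hγA haccA h0A hlam2
  have hsurj : Function.Surjective (blockSub A B D lam) :=
    blockSub_surjective hRA (ContinuousLinearMap.isUnit_iff_bijective.1
      (isUnit_schurComplement haccA haccD hlam1 hlam2.le hRA)).2
  let ι : A.domain × H →ₗ[ℂ] WithLp 2 (H × H) :=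
    (WithLp.linearEquiv 2 ℂ (H × H)).symm.toLinearMap ∘ₗ A.domain.subtype.prodMap LinearMap.id
  have hι : Function.Injective ι :=
    (WithLp.linearEquiv 2 ℂ (H × H)).symm.injective.comp
      (Subtype.val_injective.prodMap Function.injective_id)
  obtain ⟨R, hRnorm, hRL⟩ := exists_clm_comp_eq_of_surjective _ ι hsurj hι hγ
    (min_mul_norm_le_norm_blockSub haccA haccD)
  refine ⟨R, hRnorm, fun x y => hRL (x, y), fun p => ?_⟩
  obtain ⟨⟨x, y⟩, rfl⟩ := hsurj p
  rw [hRL]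
  exact ⟨x.2, rfl, rfl⟩

/-- Lemma 5.1: spectral gap and resolvent estimate for the block
operator matrix `𝒜 = [[A, B], [B*, D]]` on `H ⊕₂ H`, with domain `D(A) × H`.
Membership of `λ` in `ρ(𝒜)` together with the bound `‖(𝒜 - λ)⁻¹‖ ≤ 1/min(...)` is
expressed by the existence of a bounded two-sided inverse `R` of `𝒜 - λ`
(written componentwise) with `‖R‖ ≤ 1/min(...)`. -/
theorem blockOperator_gap_and_resolvent_bound
    (A : H →ₗ.[ℂ] H)
    (hclosed : IsClosed (A.graph : Set (H × H)))
    (hdense : Dense (A.domain : Set H))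
    (h0A : (0 : ℂ) ∈ presolventSet A)
    (B D : H →L[ℂ] H) (hD : IsUnit D)
    (γA γD : ℝ) (hγA : 0 < γA) (hγD : 0 < γD)
    (haccA : ∀ x : A.domain, γA * ‖(x : H)‖ ^ 2 ≤ (inner ℂ (x : H) (A x) : ℂ).re)
    (haccD : ∀ x : H, (inner ℂ x (D x) : ℂ).re ≤ -(γD * ‖x‖ ^ 2))
    (lam : ℂ) (hlam1 : -γD < lam.re) (hlam2 : lam.re < γA) :
    ∃ R : WithLp 2 (H × H) →L[ℂ] WithLp 2 (H × H),
      ‖R‖ ≤ 1 / min (γA - lam.re) (γD + lam.re) ∧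
      (∀ (x : A.domain) (y : H),
        R ((WithLp.equiv 2 (H × H)).symm
            (A x + B y - lam • (x : H),
             ContinuousLinearMap.adjoint B (x : H) + D y - lam • y)) =
          (WithLp.equiv 2 (H × H)).symm ((x : H), y)) ∧
      ∀ p : WithLp 2 (H × H),
        ∃ hx : (WithLp.equiv 2 (H × H) (R p)).1 ∈ A.domain,
          A ⟨(WithLp.equiv 2 (H × H) (R p)).1, hx⟩ +
              B (WithLp.equiv 2 (H × H) (R p)).2 -
              lam • (WithLp.equiv 2 (H × H) (R p)).1 =
            (WithLp.equiv 2 (H × H) p).1 ∧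
          ContinuousLinearMap.adjoint B (WithLp.equiv 2 (H × H) (R p)).1 +
              D (WithLp.equiv 2 (H × H) (R p)).2 -
              lam • (WithLp.equiv 2 (H × H) (R p)).2 =
            (WithLp.equiv 2 (H × H) p).2 :=
  blockOperator_gap_and_resolvent_bound_general A h0A B D γA γD hγA haccA haccD lam hlam1 hlam2
end
end
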